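/- arXiv:2602.13144 — 7 statements merged into one kernel-verified Lean document; each statement's English description precedes it below -/
import Mathlib

section
/- Let F̂ be an extension of a Set-functor F. If for every relation r : X ⇸ X with 1_X ≤ r one has 1_{FX} ≤ F̂r, then for every surjective function e : X → Y, F̂(e°) = (F e)°. -/
/-!
Write `r` for the graph of `e`. Surjectivity gives `r° ; r = 1_Y`, and `1_X ≤ r ; r°` holds for any
function. Applying `F̂`, which preserves composition and identities, yields `F̂(r°) ; F e = 1` and,
by the hypothesis on reflexive relations, `1 ≤ F e ; F̂(r°)`. These two inequalities say that
`F̂(r°)` is right adjoint to the map `F e`, and the only such relation is the converse of its graph.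
-/

open CategoryTheory

/-- The graph of a function, as a relation. -/
def graphRel {X Y : Type} (f : X → Y) : Rel X Y := fun x y => f x = y

/-- Relational composition (as `Rel.comp` in the older Mathlib). -/
def Rel.comp {α β γ : Type*} (r : Rel α β) (s : Rel β γ) : Rel α γ := fun x z => ∃ y, r x y ∧ s y z

/-- Converse relation (as `Rel.inv` in the older Mathlib). -/
def Rel.inv {α β : Type*} (r : Rel α β) : Rel β α := flip r

/-- An extension of a `Set`-endofunctor `F` to the category of sets and relations:
an assignment on relations that preserves relational composition and agrees with `F`
on (graphs of) functions. -/
structure RelExtension (F : Type ⥤ Type) where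
  ext : ∀ {X Y : Type}, Rel X Y → Rel (F.obj X) (F.obj Y)
  ext_comp : ∀ {X Y Z : Type} (r : Rel X Y) (s : Rel Y Z),
    ext (r.comp s) = (ext r).comp (ext s)
  ext_fun : ∀ {X Y : Type} (f : X → Y), ext (graphRel f) = graphRel (F.map (TypeCat.ofHom f))

theorem graphRel_id_le_comp_inv {X Y : Type} (f : X → Y) :
    graphRel (id : X → X) ≤ (graphRel f).comp (graphRel f).inv := by
  rintro x _ rfl
  exact ⟨f x, rfl, rfl⟩

theorem inv_comp_graphRel_of_surjective {X Y : Type} {f : X → Y} (hf : Function.Surjective f) :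
    (graphRel f).inv.comp (graphRel f) = graphRel (id : Y → Y) := by
  funext y y'
  apply propext
  constructor
  · rintro ⟨x, rfl, rfl⟩
    rfl
  · rintro rfl
    obtain ⟨x, rfl⟩ := hf y
    exact ⟨x, rfl, rfl⟩

theorem eq_inv_graphRel_of_adjoint {A B : Type} {s : Rel B A} {g : A → B}
    (counit : s.comp (graphRel g) ≤ graphRel (id : B → B))
    (unit : graphRel (id : A → A) ≤ (graphRel g).comp s) :
    s = (graphRel g).inv := by
  funext b a
  apply propext
  constructor
  · intro hba
    exact (counit b (g a) ⟨a, hba, rfl⟩).symm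
  · rintro rfl
    obtain ⟨_, rfl, hs⟩ := unit a a rfl
    exact hs

theorem RelExtension.ext_id {F : Type ⥤ Type} (E : RelExtension F) (X : Type) :
    E.ext (graphRel (id : X → X)) = graphRel (id : F.obj X → F.obj X) := by
  rw [E.ext_fun, show TypeCat.ofHom (id : X → X) = 𝟙 X from rfl, F.map_id]
  rfl

theorem stmt4 (F : Type ⥤ Type) (E : RelExtension F)
    (h : ∀ (X : Type) (r : Rel X X), graphRel (id : X → X) ≤ r →
      graphRel (id : F.obj X → F.obj X) ≤ E.ext r)
    {X Y : Type} (e : X → Y) (he : Function.Surjective e) :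
    E.ext (graphRel e).inv = (graphRel (F.map (TypeCat.ofHom e))).inv := by
  apply eq_inv_graphRel_of_adjoint
  · rw [← E.ext_fun, ← E.ext_comp, inv_comp_graphRel_of_surjective he, E.ext_id]
  · rw [← E.ext_fun, ← E.ext_comp]
    exact h X _ (graphRel_id_le_comp_inv e)
end

section
/- An extension F̂ of a Set-functor F is locally monotone if and only if for every set X, F ρ₁ ≤ F̂(∇_X°), where ∇_X : X + X → X is the codiagonal and ρ₁ : X → X + X is the first coproduct injection. -/
open CategoryTheory

/-- Local monotonicity of an extension. -/
def LocallyMonotone {F : Type ⥤ Type} (E : RelExtension F) : Prop :=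
  ∀ (X Y : Type) (r s : Rel X Y), r ≤ s → E.ext r ≤ E.ext s

/-!
Since `ρ₁ ≤ ∇°`, local monotonicity gives `F ρ₁ = F̂ ρ₁ ≤ F̂ ∇°`. Conversely, a pair `r ≤ s` of
relations `X → Y` is encoded as the copairing `[r, s] : X + X → Y`, for which `r = ρ₁ ; [r, s]`
and `s = r ⊔ s = ∇° ; [r, s]`. Functoriality of `F̂` and `F ρ₁ ≤ F̂ ∇°` then give `F̂ r ≤ F̂ s`.
-/

namespace Rel

variable {α β γ : Type*}

theorem comp_mono_left {r r' : Rel α β} (h : r ≤ r') (s : Rel β γ) : r.comp s ≤ r'.comp s :=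
  fun _ _ ⟨b, hr, hs⟩ => ⟨b, h _ _ hr, hs⟩

end Rel

section Copairing

variable {X Y : Type}

theorem graphRel_inl_le_inv_graphRel_codiag :
    graphRel (Sum.inl : X → X ⊕ X) ≤ (graphRel (Sum.elim id id : X ⊕ X → X)).inv := by
  rintro x _ rfl
  rfl

theorem graphRel_inl_comp_sumElim (r s : Rel X Y) :
    (graphRel (Sum.inl : X → X ⊕ X)).comp (Sum.elim r s) = r := by
  funext x y
  refine propext ⟨?_, fun h => ⟨Sum.inl x, rfl, h⟩⟩
  rintro ⟨_, rfl, h⟩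
  exact h

theorem inv_graphRel_codiag_comp_sumElim (r s : Rel X Y) :
    (graphRel (Sum.elim id id : X ⊕ X → X)).inv.comp (Sum.elim r s) = r ⊔ s := by
  funext x y
  refine propext ⟨?_, ?_⟩
  · rintro ⟨(a | a), rfl, h⟩
    exacts [Or.inl h, Or.inr h]
  · rintro (h | h)
    exacts [⟨Sum.inl x, rfl, h⟩, ⟨Sum.inr x, rfl, h⟩]

end Copairing

theorem stmt5 (F : Type ⥤ Type) (E : RelExtension F) :
    LocallyMonotone E ↔
      ∀ X : Type, graphRel (F.map (TypeCat.ofHom (Sum.inl : X → X ⊕ X))) ≤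
        E.ext (graphRel (Sum.elim id id : X ⊕ X → X)).inv := by
  refine ⟨fun hmono X => ?_, fun H X Y r s hrs => ?_⟩
  · rw [← E.ext_fun]
    exact hmono _ _ _ _ graphRel_inl_le_inv_graphRel_codiag
  · calc E.ext r
        = (graphRel (F.map (TypeCat.ofHom (Sum.inl : X → X ⊕ X)))).comp (E.ext (Sum.elim r s)) := by
          rw [← E.ext_fun, ← E.ext_comp, graphRel_inl_comp_sumElim]
      _ ≤ (E.ext (graphRel (Sum.elim id id : X ⊕ X → X)).inv).comp (E.ext (Sum.elim r s)) :=
          Rel.comp_mono_left (H X) _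
      _ = E.ext s := by
          rw [← E.ext_comp, inv_graphRel_codiag_comp_sumElim, sup_of_le_right hrs]
end

section
/- Suppose the Set-functor F preserves weak pullbacks, F̄ is its Barr extension, and F̂ is any extension of F. If F̄ ≤ F̂ pointwise (or F̄ ≥ F̂ pointwise), then F̄ = F̂. -/
open CategoryTheory

/-- A commuting square of functions is a weak pullback if every competing cone factors
through it (not necessarily uniquely). -/
def IsWeakPullback {A B C D : Type} (p : A → B) (q : A → C) (f : B → D) (g : C → D) : Prop :=
  (∀ a, f (p a) = g (q a)) ∧ ∀ b c, f b = g c → ∃ a, p a = b ∧ q a = c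

/-- A functor preserves weak pullbacks if it maps weak pullback squares to weak pullback
squares. -/
def PreservesWeakPullbacks (F : Type ⥤ Type) : Prop :=
  ∀ (A B C D : Type) (p : A → B) (q : A → C) (f : B → D) (g : C → D),
    IsWeakPullback p q f g → IsWeakPullback (F.map (TypeCat.ofHom p)) (F.map (TypeCat.ofHom q)) (F.map (TypeCat.ofHom f)) (F.map (TypeCat.ofHom g))

/-- The Barr extension of a functor, defined via the canonical span factorization of a
relation. -/
def barrExt (F : Type ⥤ Type) {X Y : Type} (r : Rel X Y) : Rel (F.obj X) (F.obj Y) :=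
  fun a b => ∃ c : F.obj {p : X × Y // r p.1 p.2},
    F.map (TypeCat.ofHom (fun p => p.1.1)) c = a ∧ F.map (TypeCat.ofHom (fun p => p.1.2)) c = b

/-! Writing a relation `r` as `π₁° ; π₂` through its graph, both `barrExt F r` and `E.ext r` are
determined by the values on converses `f°` of maps, and `barrExt F f° = (F f)°`. So it suffices to
show `E.ext f° = (F f)°`.

If `E ≤ barrExt F`, then `E` sends subidentities to subidentities, hence is monotone, and applying
it to `id ≤ f ; f°` gives `(F f)° ≤ E.ext f°`.

If `barrExt F ≤ E`, factor `f` as a surjection followed by an injection. For a surjection `q`,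
`q° ; q = id` forces `E.ext q° ≤ (F q)°`. Every injection is a pullback of `true : Unit → Bool`,
so weak-pullback preservation reduces injections to this single map, where two different
retractions of `{p | p.1 ∨ p.2} ⊆ Bool × Bool` pin down `E.ext true°`. -/

def cographRel {X Z : Type} (f : Z → X) : Rel X Z := fun x z => f z = x

section Relations

variable {X Y Z : Type}

theorem cographRel_comp_cographRel (a : Y → X) (b : Z → Y) :
    (cographRel a).comp (cographRel b) = cographRel (a ∘ b) := by
  ext x z
  constructor
  · rintro ⟨_, hy, rfl⟩
    exact hy
  · intro h
    exact ⟨b z, h, rfl⟩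

theorem cographRel_id : cographRel (@id X) = graphRel id := by
  ext x x'
  exact eq_comm

theorem cographRel_comp_graphRel_of_surjective {q : Z → X} (hq : q.Surjective) :
    (cographRel q).comp (graphRel q) = graphRel id := by
  ext x x'
  constructor
  · rintro ⟨z, rfl, rfl⟩
    rfl
  · rintro rfl
    obtain ⟨z, rfl⟩ := hq x
    exact ⟨z, rfl, rfl⟩

theorem graphRel_comp_cographRel_of_injective {i : Z → X} (hi : i.Injective) :
    (graphRel i).comp (cographRel i) = graphRel id := by
  ext z z'
  constructor
  · rintro ⟨x, rfl, h⟩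
    exact hi h.symm
  · rintro rfl
    exact ⟨i z, rfl, rfl⟩

theorem id_le_graphRel_comp_cographRel (f : Z → X) :
    graphRel id ≤ (graphRel f).comp (cographRel f) := by
  rintro z _ rfl
  exact ⟨f z, rfl, rfl⟩

theorem cographRel_comp_graphRel_tabulation (r : Rel X Y) :
    (cographRel fun p : {p : X × Y // r p.1 p.2} => p.1.1).comp
      (graphRel fun p : {p : X × Y // r p.1 p.2} => p.1.2) = r := by
  ext x y
  constructor
  · rintro ⟨⟨⟨x, y⟩, h⟩, rfl, rfl⟩
    exact h
  · intro h
    exact ⟨⟨(x, y), h⟩, rfl, rfl⟩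

theorem graphRel_comp_cographRel_of_isWeakPullback {A B C D : Type} {p : A → B} {q : A → C}
    {f : B → D} {g : C → D} (h : IsWeakPullback p q f g) :
    (graphRel f).comp (cographRel g) = (cographRel p).comp (graphRel q) := by
  ext b c
  constructor
  · rintro ⟨d, hb, hc⟩
    obtain ⟨a, rfl, rfl⟩ := h.2 b c (hb.trans hc.symm)
    exact ⟨a, rfl, rfl⟩
  · rintro ⟨a, rfl, rfl⟩
    exact ⟨f (p a), rfl, (h.1 a).symm⟩

end Relations

section Functor

variable {F : Type ⥤ Type} {X Y Z : Type}

theorem map_ofHom_comp_apply (f : X → Y) (g : Y → Z) (a : F.obj X) :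
    F.map (TypeCat.ofHom (g ∘ f)) a = F.map (TypeCat.ofHom g) (F.map (TypeCat.ofHom f) a) :=
  F.map_comp_apply (TypeCat.ofHom f) (TypeCat.ofHom g) a

theorem map_ofHom_id_apply (a : F.obj X) : F.map (TypeCat.ofHom id) a = a :=
  F.map_id_apply X a

theorem barrExt_cographRel (f : Z → X) :
    barrExt F (cographRel f) = cographRel (F.map (TypeCat.ofHom f)) := by
  ext a b
  constructor
  · rintro ⟨c, rfl, rfl⟩
    have hfst : (fun p : {p : X × Z // cographRel f p.1 p.2} => p.1.1) = f ∘ fun p => p.1.2 :=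
      funext fun p => p.2.symm
    rw [hfst, map_ofHom_comp_apply]
    rfl
  · rintro rfl
    let e : Z → {p : X × Z // cographRel f p.1 p.2} := fun z => ⟨(f z, z), rfl⟩
    refine ⟨F.map (TypeCat.ofHom e) b, ?_, ?_⟩
    · exact (map_ofHom_comp_apply e _ b).symm
    · exact (map_ofHom_comp_apply e _ b).symm.trans (map_ofHom_id_apply b)

theorem eq_of_barrExt_of_le_id {s : Rel X X} (hs : s ≤ graphRel id) {a b : F.obj X}
    (h : barrExt F s a b) : a = b := by
  obtain ⟨c, rfl, rfl⟩ := h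
  have hfst : (fun p : {p : X × X // s p.1 p.2} => p.1.1) = fun p => p.1.2 :=
    funext fun p => hs _ _ p.2
  rw [hfst]

end Functor

namespace RelExtension

variable {F : Type ⥤ Type} (E : RelExtension F) {X Y Z : Type}

theorem ext_graphRel_id : E.ext (graphRel (@id X)) = graphRel id := by
  rw [E.ext_fun]
  exact congrArg graphRel (funext map_ofHom_id_apply)

theorem ext_eq_ext_cographRel_comp (r : Rel X Y) :
    E.ext r = (E.ext (cographRel fun p : {p : X × Y // r p.1 p.2} => p.1.1)).comp
      (graphRel (F.map (TypeCat.ofHom fun p : {p : X × Y // r p.1 p.2} => p.1.2))) := by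
  conv_lhs => rw [← cographRel_comp_graphRel_tabulation r]
  rw [E.ext_comp, E.ext_fun]

theorem barrExt_eq_ext_of_ext_cographRel
    (h : ∀ {Z X : Type} (f : Z → X), E.ext (cographRel f) = cographRel (F.map (TypeCat.ofHom f)))
    (r : Rel X Y) : barrExt F r = E.ext r := by
  rw [E.ext_eq_ext_cographRel_comp, h]
  rfl

theorem map_comp_ext_cographRel_of_isWeakPullback {A B C D : Type} {p : A → B} {q : A → C}
    {f : B → D} {g : C → D} (h : IsWeakPullback p q f g) :
    (graphRel (F.map (TypeCat.ofHom f))).comp (E.ext (cographRel g)) =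
      (E.ext (cographRel p)).comp (graphRel (F.map (TypeCat.ofHom q))) := by
  rw [← E.ext_fun, ← E.ext_fun, ← E.ext_comp, ← E.ext_comp,
    graphRel_comp_cographRel_of_isWeakPullback h]

theorem map_eq_of_ext_cographRel_of_surjective {q : Z → X} (hq : q.Surjective) {a : F.obj X}
    {b : F.obj Z} (h : E.ext (cographRel q) a b) : F.map (TypeCat.ofHom q) b = a := by
  have hab : ((E.ext (cographRel q)).comp (graphRel (F.map (TypeCat.ofHom q))))
      a (F.map (TypeCat.ofHom q) b) := ⟨b, h, rfl⟩
  rw [← E.ext_fun, ← E.ext_comp, cographRel_comp_graphRel_of_surjective hq, ext_graphRel_id] at hab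
  exact hab.symm

theorem eq_of_ext_cographRel_map_of_injective {i : Z → X} (hi : i.Injective) {a b : F.obj Z}
    (h : E.ext (cographRel i) (F.map (TypeCat.ofHom i) a) b) : a = b := by
  have hab : ((graphRel (F.map (TypeCat.ofHom i))).comp (E.ext (cographRel i))) a b :=
    ⟨_, rfl, h⟩
  rwa [← E.ext_fun, ← E.ext_comp, graphRel_comp_cographRel_of_injective hi,
    ext_graphRel_id] at hab

theorem map_eq_of_ext_cographRel_of_leftInverse {j : Z → X} {ρ : X → Z}
    (hρ : Function.LeftInverse ρ j)
    (hlow : cographRel (F.map (TypeCat.ofHom ρ)) ≤ E.ext (cographRel ρ)) {a : F.obj X}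
    {b : F.obj Z} (h : E.ext (cographRel j) a b) : F.map (TypeCat.ofHom ρ) a = b := by
  have hab : ((E.ext (cographRel ρ)).comp (E.ext (cographRel j))) (F.map (TypeCat.ofHom ρ) a) b :=
    ⟨a, hlow _ _ rfl, h⟩
  rwa [← E.ext_comp, cographRel_comp_cographRel, hρ.comp_eq_id, cographRel_id,
    ext_graphRel_id] at hab

/- `true°` pulled back along `or` is the converse of the inclusion of `{p | p.1 ∨ p.2}` into
`Bool × Bool`; that inclusion has two retractions, and composing them with the diagonal gives the
maps `b ↦ (b, true)` and `b ↦ (true, b)`, which only agree at `true`. -/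
theorem map_pair_true_eq_of_ext_cographRel_true
    (hlow : ∀ {Z X : Type} (f : Z → X),
      cographRel (F.map (TypeCat.ofHom f)) ≤ E.ext (cographRel f))
    {y : F.obj Bool} {u : F.obj Unit} (hyu : E.ext (cographRel fun _ : Unit => true) y u) :
    F.map (TypeCat.ofHom fun b : Bool => (b, true)) y =
      F.map (TypeCat.ofHom fun b : Bool => (true, b)) y := by
  let S := {p : Bool × Bool // (p.1 || p.2) = true}
  let ρ₁ : Bool × Bool → S := fun p => ⟨(p.1, p.2 || !p.1), by cases p.1 <;> simp⟩
  let ρ₂ : Bool × Bool → S := fun p => ⟨(p.1 || !p.2, p.2), by cases p.2 <;> simp⟩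
  have hρ₁ : Function.LeftInverse ρ₁ Subtype.val := by
    rintro ⟨⟨_ | _, _ | _⟩, h⟩ <;> first | rfl | cases h
  have hρ₂ : Function.LeftInverse ρ₂ Subtype.val := by
    rintro ⟨⟨_ | _, _ | _⟩, h⟩ <;> first | rfl | cases h
  have hor : IsWeakPullback (Subtype.val : S → Bool × Bool) (fun _ => ())
      (fun p => p.1 || p.2) (fun _ : Unit => true) :=
    ⟨fun s => s.2, fun p _ h => ⟨⟨p, h⟩, rfl, rfl⟩⟩
  have hdiag : F.map (TypeCat.ofHom fun p : Bool × Bool => p.1 || p.2)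
      (F.map (TypeCat.ofHom fun b => (b, b)) y) = y := by
    rw [← map_ofHom_comp_apply]
    convert map_ofHom_id_apply y
    funext b
    exact Bool.or_self b
  obtain ⟨w, hw, -⟩ : ((E.ext (cographRel (Subtype.val : S → Bool × Bool))).comp
      (graphRel (F.map (TypeCat.ofHom fun _ => ())))) (F.map (TypeCat.ofHom fun b => (b, b)) y) u := by
    rw [← E.map_comp_ext_cographRel_of_isWeakPullback hor]
    exact ⟨y, hdiag, hyu⟩
  have hα : (fun b : Bool => (b, true)) = Subtype.val ∘ ρ₁ ∘ fun b => (b, b) := by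
    funext b; cases b <;> rfl
  have hβ : (fun b : Bool => (true, b)) = Subtype.val ∘ ρ₂ ∘ fun b => (b, b) := by
    funext b; cases b <;> rfl
  rw [hα, hβ, map_ofHom_comp_apply (ρ₁ ∘ _) Subtype.val, map_ofHom_comp_apply _ ρ₁,
    E.map_eq_of_ext_cographRel_of_leftInverse hρ₁ (hlow ρ₁) hw,
    map_ofHom_comp_apply (ρ₂ ∘ _) Subtype.val, map_ofHom_comp_apply _ ρ₂,
    E.map_eq_of_ext_cographRel_of_leftInverse hρ₂ (hlow ρ₂) hw]

theorem ext_cographRel_true_le (hF : PreservesWeakPullbacks F)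
    (hlow : ∀ {Z X : Type} (f : Z → X),
      cographRel (F.map (TypeCat.ofHom f)) ≤ E.ext (cographRel f)) :
    E.ext (cographRel fun _ : Unit => true) ≤
      cographRel (F.map (TypeCat.ofHom fun _ : Unit => true)) := by
  intro y u hyu
  have hsq : IsWeakPullback (fun _ : Unit => true) (fun _ : Unit => true)
      (fun b : Bool => (b, true)) (fun b : Bool => (true, b)) :=
    ⟨fun _ => rfl, fun b c h => ⟨(), (Prod.ext_iff.1 h).1.symm, (Prod.ext_iff.1 h).2⟩⟩
  obtain ⟨a, rfl, -⟩ :=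
    (hF _ _ _ _ _ _ _ _ hsq).2 y y (E.map_pair_true_eq_of_ext_cographRel_true hlow hyu)
  rw [E.eq_of_ext_cographRel_map_of_injective (fun _ _ _ => rfl) hyu]
  rfl

theorem ext_cographRel_le_of_injective (hF : PreservesWeakPullbacks F)
    (htrue : E.ext (cographRel fun _ : Unit => true) ≤
      cographRel (F.map (TypeCat.ofHom fun _ : Unit => true)))
    {i : Z → X} (hi : i.Injective) :
    E.ext (cographRel i) ≤ cographRel (F.map (TypeCat.ofHom i)) := by
  classical
  intro x c hxc
  -- `i` is the pullback of `true` along the characteristic map of its range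
  have hsq : IsWeakPullback i (fun _ => ()) (fun x => decide (x ∈ Set.range i))
      (fun _ : Unit => true) :=
    ⟨fun z => decide_eq_true (Set.mem_range_self z), fun x _ h => by
      obtain ⟨z, rfl⟩ := of_decide_eq_true h
      exact ⟨z, rfl, rfl⟩⟩
  obtain ⟨y, hxy, hy⟩ : ((graphRel (F.map (TypeCat.ofHom fun x => decide (x ∈ Set.range i)))).comp
      (E.ext (cographRel fun _ : Unit => true))) x (F.map (TypeCat.ofHom fun _ => ()) c) := by
    rw [E.map_comp_ext_cographRel_of_isWeakPullback hsq]
    exact ⟨c, hxc, rfl⟩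
  obtain ⟨a, rfl, -⟩ := (hF _ _ _ _ _ _ _ _ hsq).2 x _ (hxy.trans (htrue _ _ hy).symm)
  rw [E.eq_of_ext_cographRel_map_of_injective hi hxc]
  rfl

theorem ext_cographRel_le (hF : PreservesWeakPullbacks F)
    (hlow : ∀ {Z X : Type} (f : Z → X),
      cographRel (F.map (TypeCat.ofHom f)) ≤ E.ext (cographRel f))
    (f : Z → X) : E.ext (cographRel f) ≤ cographRel (F.map (TypeCat.ofHom f)) := by
  intro x c hxc
  rw [← Set.rangeFactorization_eq (f := f), ← cographRel_comp_cographRel, E.ext_comp] at hxc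
  obtain ⟨m, hxm, hmc⟩ := hxc
  have hm := E.ext_cographRel_le_of_injective hF (E.ext_cographRel_true_le hF hlow)
    Subtype.val_injective _ _ hxm
  have hc := E.map_eq_of_ext_cographRel_of_surjective Set.rangeFactorization_surjective hmc
  show F.map (TypeCat.ofHom f) c = x
  rw [← Set.rangeFactorization_eq (f := f), map_ofHom_comp_apply, hc]
  exact hm

theorem ext_cographRel_of_barrExt_le (hF : PreservesWeakPullbacks F)
    (hA : ∀ (X Y : Type) (r : Rel X Y), barrExt F r ≤ E.ext r) (f : Z → X) :
    E.ext (cographRel f) = cographRel (F.map (TypeCat.ofHom f)) := by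
  have hlow {Z X : Type} (f : Z → X) :
      cographRel (F.map (TypeCat.ofHom f)) ≤ E.ext (cographRel f) :=
    barrExt_cographRel f ▸ hA _ _ _
  exact le_antisymm (E.ext_cographRel_le hF hlow f) (hlow f)

theorem ext_le_id_of_le_id (hB : ∀ (X Y : Type) (r : Rel X Y), E.ext r ≤ barrExt F r)
    {s : Rel X X} (hs : s ≤ graphRel id) : E.ext s ≤ graphRel id :=
  fun _ _ h => eq_of_barrExt_of_le_id hs (hB _ _ _ _ _ h)

theorem ext_mono (hB : ∀ (X Y : Type) (r : Rel X Y), E.ext r ≤ barrExt F r)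
    {r₁ r₂ : Rel X Y} (h : r₁ ≤ r₂) : E.ext r₁ ≤ E.ext r₂ := by
  let u := fun p : {p : X × Y // r₂ p.1 p.2} => p.1.1
  let v := fun p : {p : X × Y // r₂ p.1 p.2} => p.1.2
  let s : Rel {p : X × Y // r₂ p.1 p.2} _ := fun z z' => z = z' ∧ r₁ z.1.1 z.1.2
  have hr₁ : r₁ = ((cographRel u).comp s).comp (graphRel v) := by
    ext x y
    constructor
    · intro hxy
      exact ⟨⟨(x, y), h x y hxy⟩, ⟨⟨(x, y), h x y hxy⟩, rfl, rfl, hxy⟩, rfl⟩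
    · rintro ⟨z, ⟨_, rfl, rfl, hz⟩, rfl⟩
      exact hz
  intro a b hab
  rw [hr₁, E.ext_comp, E.ext_comp, E.ext_fun] at hab
  obtain ⟨m, ⟨m', ham', hm'm⟩, hmb⟩ := hab
  rw [E.ext_eq_ext_cographRel_comp]
  refine ⟨m', ham', ?_⟩
  have hm' : m' = m := E.ext_le_id_of_le_id hB (fun _ _ h => h.1) _ _ hm'm
  rw [hm']
  exact hmb

theorem ext_cographRel_of_ext_le_barrExt
    (hB : ∀ (X Y : Type) (r : Rel X Y), E.ext r ≤ barrExt F r) (f : Z → X) :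
    E.ext (cographRel f) = cographRel (F.map (TypeCat.ofHom f)) := by
  refine le_antisymm (barrExt_cographRel f ▸ hB _ _ _) ?_
  rintro _ c rfl
  have hker := E.ext_mono hB (id_le_graphRel_comp_cographRel f)
  rw [ext_graphRel_id, E.ext_comp, E.ext_fun] at hker
  obtain ⟨_, rfl, h⟩ := hker c c rfl
  exact h

end RelExtension

theorem stmt7 (F : Type ⥤ Type) (hF : PreservesWeakPullbacks F) (E : RelExtension F)
    (h : (∀ (X Y : Type) (r : Rel X Y), barrExt F r ≤ E.ext r) ∨
         (∀ (X Y : Type) (r : Rel X Y), E.ext r ≤ barrExt F r)) :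
    ∀ (X Y : Type) (r : Rel X Y), barrExt F r = E.ext r := by
  intro X Y r
  rcases h with hA | hB
  · exact E.barrExt_eq_ext_of_ext_cographRel (E.ext_cographRel_of_barrExt_le hF hA) r
  · exact E.barrExt_eq_ext_of_ext_cographRel (E.ext_cographRel_of_ext_le_barrExt hB) r
end

section
/- For every Set-functor F and every function e : Y → X, the graph of F e contains the union over all functions f : Y → X + X with e · f° = ∇_X of the relations (F ρ₁)° · F f, where ∇_X : X + X → X is the codiagonal and ρ₁ the first coproduct injection. -/
/-! The hypothesis `e · f° = ∇` forces `e = ∇ ∘ f`. Since `ρ₁` is a section of `∇`, so is `F ρ₁`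
of `F ∇`, hence `(F ρ₁)° ≤ F ∇` and `(F ρ₁)° · F f ≤ F ∇ · F f = F e`. -/

open CategoryTheory

theorem eq_comp_of_inv_comp_graphRel_eq {X Y Z : Type} {f : Y → Z} {e : Y → X} {g : Z → X}
    (h : (graphRel f).inv.comp (graphRel e) = graphRel g) : e = g ∘ f := by
  funext y
  have hy : graphRel g (f y) (e y) := h ▸ ⟨y, rfl, rfl⟩
  exact hy.symm

theorem graphRel_map_comp_inv_le_map_comp_of_section {C : Type*} [Category C] (F : C ⥤ Type)
    {X Y Z : C} (f : Y ⟶ Z) {s : X ⟶ Z} {g : Z ⟶ X} (hs : s ≫ g = 𝟙 X) :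
    (graphRel (F.map f)).comp (graphRel (F.map s)).inv ≤ graphRel (F.map (f ≫ g)) := by
  rintro a b ⟨c, (hfa : F.map f a = c), (hsb : F.map s b = c)⟩
  change F.map (f ≫ g) a = b
  rw [Functor.map_comp_apply, hfa, ← hsb, ← Functor.map_comp_apply, hs,
    Functor.map_id_apply]

theorem stmt9 (F : Type ⥤ Type) {X Y : Type} (e : Y → X) :
    ∀ f : Y → X ⊕ X,
      ((graphRel f).inv).comp (graphRel e) = graphRel (Sum.elim id id : X ⊕ X → X) →
      (graphRel (F.map (TypeCat.ofHom f))).comp (graphRel (F.map (TypeCat.ofHom (Sum.inl : X → X ⊕ X)))).inv ≤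
        graphRel (F.map (TypeCat.ofHom e)) := by
  intro f h
  obtain rfl := eq_comp_of_inv_comp_graphRel_eq h
  exact graphRel_map_comp_inv_le_map_comp_of_section F (TypeCat.ofHom f)
    (g := TypeCat.ofHom (Sum.elim id id)) rfl
end

section
/- Given monads S = (S, e^S, m^S) and T = (T, e^T, m^T) on Set and a monad morphism λ : S → T, the natural transformation with components e^S_{TX} ∘ m^T_X ∘ T λ_X : T S X → S T X is a Kleisli distributive law of the functor T over the monad S: it is natural and commutes with the unit and multiplication of S. -/
/-- A monad on `Set`, given by an object assignment, a functorial action on maps, a unit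
and a multiplication. -/
structure SetMonad where
  obj : Type → Type
  map : ∀ {X Y : Type}, (X → Y) → obj X → obj Y
  map_id : ∀ X : Type, map (id : X → X) = id
  map_comp : ∀ {X Y Z : Type} (f : X → Y) (g : Y → Z), map (g ∘ f) = map g ∘ map f
  unit : ∀ {X : Type}, X → obj X
  mult : ∀ {X : Type}, obj (obj X) → obj X
  unit_natural : ∀ {X Y : Type} (f : X → Y), map f ∘ unit = unit ∘ f
  mult_natural : ∀ {X Y : Type} (f : X → Y), map f ∘ mult = mult ∘ map (map f)
  unit_mult : ∀ X : Type, mult ∘ (unit : obj X → obj (obj X)) = id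
  map_unit_mult : ∀ X : Type, mult ∘ map (unit : X → obj X) = id
  mult_assoc : ∀ X : Type,
    (mult : obj (obj X) → obj X) ∘ map mult = mult ∘ mult

/-- A monad morphism `λ : S → T`: a natural transformation commuting with units and
multiplications. -/
structure SetMonadHom (S T : SetMonad) where
  app : ∀ X : Type, S.obj X → T.obj X
  natural : ∀ {X Y : Type} (f : X → Y), T.map f ∘ app X = app Y ∘ S.map f
  app_unit : ∀ X : Type, app X ∘ (S.unit : X → S.obj X) = T.unit
  app_mult : ∀ X : Type, app X ∘ (S.mult : S.obj (S.obj X) → S.obj X)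
    = T.mult ∘ T.map (app X) ∘ app (S.obj X)

/-!
Write `τ := m^T ∘ Tλ : T S → T`, so that the law is `σ = e^S T ∘ τ`. The monad-morphism
axioms make `τ` natural and turn it into a right action of `S` on `T`: `τ ∘ T e^S = id` and
`τ ∘ T m^S = τ ∘ τ S`. The three axioms of a Kleisli law for `σ` follow, since
`m^S ∘ S h ∘ e^S = h` for every Kleisli arrow `h`.
-/

namespace SetMonad

variable (M : SetMonad) {X Y Z : Type}

theorem map_comp_apply (f : X → Y) (g : Y → Z) (x : M.obj X) :
    M.map (g ∘ f) x = M.map g (M.map f x) :=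
  congrFun (M.map_comp f g) x

theorem map_unit_apply (f : X → Y) (x : X) : M.map f (M.unit x) = M.unit (f x) :=
  congrFun (M.unit_natural f) x

theorem map_mult_apply (f : X → Y) (x : M.obj (M.obj X)) :
    M.map f (M.mult x) = M.mult (M.map (M.map f) x) :=
  congrFun (M.mult_natural f) x

theorem mult_unit_apply (x : M.obj X) : M.mult (M.unit x) = x :=
  congrFun (M.unit_mult X) x

theorem mult_map_unit_apply (x : M.obj X) : M.mult (M.map M.unit x) = x :=
  congrFun (M.map_unit_mult X) x

theorem mult_map_mult_apply (x : M.obj (M.obj (M.obj X))) :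
    M.mult (M.map M.mult x) = M.mult (M.mult x) :=
  congrFun (M.mult_assoc X) x

theorem mult_map_unit_comp (h : X → M.obj Y) : M.mult ∘ M.map h ∘ M.unit = h := by
  funext x
  simp only [Function.comp_apply, map_unit_apply, mult_unit_apply]

end SetMonad

namespace SetMonadHom

open SetMonad

variable {S T : SetMonad} (lam : SetMonadHom S T) {X Y : Type}

theorem natural_apply (f : X → Y) (x : S.obj X) :
    T.map f (lam.app X x) = lam.app Y (S.map f x) :=
  congrFun (lam.natural f) x

def flatten (X : Type) : T.obj (S.obj X) → T.obj X :=
  T.mult ∘ T.map (lam.app X)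

theorem flatten_natural (f : X → Y) :
    lam.flatten Y ∘ T.map (S.map f) = T.map f ∘ lam.flatten X := by
  funext t
  simp only [flatten, Function.comp_apply, map_mult_apply, ← map_comp_apply]
  congr 2
  funext x
  exact (lam.natural_apply f x).symm

theorem flatten_comp_map_unit (X : Type) : lam.flatten X ∘ T.map S.unit = id := by
  funext t
  simp only [flatten, Function.comp_apply, ← map_comp_apply, lam.app_unit, id_eq,
    mult_map_unit_apply]

theorem flatten_comp_map_mult (X : Type) :
    lam.flatten X ∘ T.map S.mult = lam.flatten X ∘ lam.flatten (S.obj X) := by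
  funext t
  calc T.mult (T.map (lam.app X) (T.map S.mult t))
      = T.mult (T.map T.mult (T.map (T.map (lam.app X) ∘ lam.app (S.obj X)) t)) := by
        rw [← map_comp_apply, ← map_comp_apply, lam.app_mult]
    _ = T.mult (T.map (lam.app X) (T.mult (T.map (lam.app (S.obj X)) t))) := by
        -- associativity of `m^T`, then naturality of `m^T` along `λ`
        rw [mult_map_mult_apply, map_comp_apply, ← map_mult_apply, map_mult_apply]

def kleisliLaw (X : Type) : T.obj (S.obj X) → S.obj (T.obj X) :=
  S.unit ∘ lam.flatten X

theorem kleisliLaw_natural (f : X → Y) :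
    lam.kleisliLaw Y ∘ T.map (S.map f) = S.map (T.map f) ∘ lam.kleisliLaw X := by
  rw [kleisliLaw, kleisliLaw, Function.comp_assoc, flatten_natural, ← Function.comp_assoc,
    ← Function.comp_assoc, S.unit_natural]

theorem kleisliLaw_comp_map_unit (X : Type) :
    lam.kleisliLaw X ∘ T.map S.unit = S.unit := by
  simp only [kleisliLaw, Function.comp_assoc, flatten_comp_map_unit, Function.comp_id]

theorem kleisliLaw_comp_map_mult (X : Type) :
    lam.kleisliLaw X ∘ T.map S.mult
      = S.mult ∘ S.map (lam.kleisliLaw X) ∘ lam.kleisliLaw (S.obj X) := by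
  calc lam.kleisliLaw X ∘ T.map S.mult = S.unit ∘ lam.flatten X ∘ lam.flatten (S.obj X) := by
        rw [kleisliLaw, Function.comp_assoc, flatten_comp_map_mult]
    _ = (S.mult ∘ S.map (lam.kleisliLaw X) ∘ S.unit) ∘ lam.flatten (S.obj X) := by
        rw [S.mult_map_unit_comp]; rfl

end SetMonadHom

/-- Any monad morphism `λ : S → T` induces a Kleisli distributive law
`e^S T ∘ m^T ∘ T λ : T S → S T` of the functor `T` over the monad `S`. -/
theorem stmt13 (S T : SetMonad) (lam : SetMonadHom S T)
    (σ : ∀ X : Type, T.obj (S.obj X) → S.obj (T.obj X))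
    (hσ : ∀ X : Type, σ X = S.unit ∘ T.mult ∘ T.map (lam.app X)) :
    (∀ (X Y : Type) (f : X → Y),
      σ Y ∘ T.map (S.map f) = S.map (T.map f) ∘ σ X) ∧
    (∀ X : Type, σ X ∘ T.map (S.unit : X → S.obj X)
      = (S.unit : T.obj X → S.obj (T.obj X))) ∧
    (∀ X : Type, σ X ∘ T.map (S.mult : S.obj (S.obj X) → S.obj X)
      = S.mult ∘ S.map (σ X) ∘ σ (S.obj X)) := by
  obtain rfl : σ = lam.kleisliLaw := funext hσ
  exact ⟨fun _ _ f => lam.kleisliLaw_natural f, lam.kleisliLaw_comp_map_unit,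
    lam.kleisliLaw_comp_map_mult⟩
end

section
/- The natural transformation ◇ : P → M from the powerset functor to the monotone neighbourhood functor, with components ◇_X(U) = {A ⊆ X | U ∩ A ≠ ∅}, is a monad morphism from the powerset monad to the monotone neighbourhood monad. -/
/-! Membership in each side of the three laws unfolds to an elementary fact about when a set
meets `A`: `f '' U` meets `B` iff `U` meets `f ⁻¹' B`, `{x}` meets `A` iff `x ∈ A`, and `⋃₀ S`
meets `A` iff some member of `S` does. -/

/-- The monotone neighbourhood functor: upward-closed collections of subsets. -/
def MNbhd (X : Type) : Type :=
  {A : Set (Set X) // ∀ s t : Set X, s ∈ A → s ⊆ t → t ∈ A}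

/-- Action of the monotone neighbourhood functor on maps. -/
def MNbhd.fmap {X Y : Type} (f : X → Y) (A : MNbhd X) : MNbhd Y :=
  ⟨{B : Set Y | f ⁻¹' B ∈ A.1}, fun s t hs hst =>
    A.2 _ _ hs (Set.preimage_mono hst)⟩

/-- Unit of the monotone neighbourhood monad. -/
def MNbhd.unit {X : Type} (x : X) : MNbhd X :=
  ⟨{A : Set X | x ∈ A}, fun _ _ hs hst => hst hs⟩

/-- Multiplication of the monotone neighbourhood monad. -/
def MNbhd.mult {X : Type} (Φ : MNbhd (MNbhd X)) : MNbhd X :=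
  ⟨{A : Set X | {U : MNbhd X | A ∈ U.1} ∈ Φ.1}, fun s t hs hst =>
    Φ.2 _ _ hs (fun U hU => U.2 _ _ hU hst)⟩

/-- The components `◇_X(U) = {A ⊆ X | U ∩ A ≠ ∅}`. -/
def diamond {X : Type} (U : Set X) : MNbhd X :=
  ⟨{A : Set X | (U ∩ A).Nonempty}, fun s t hs hst =>
    hs.mono (Set.inter_subset_inter_right U hst)⟩

namespace MNbhd

@[ext]
theorem ext {X : Type} {A B : MNbhd X} (h : ∀ s, s ∈ A.1 ↔ s ∈ B.1) : A = B :=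
  Subtype.ext (Set.ext h)

@[simp]
theorem mem_fmap {X Y : Type} (f : X → Y) (A : MNbhd X) (B : Set Y) :
    B ∈ (fmap f A).1 ↔ f ⁻¹' B ∈ A.1 :=
  Iff.rfl

@[simp]
theorem mem_unit {X : Type} (x : X) (A : Set X) : A ∈ (unit x).1 ↔ x ∈ A :=
  Iff.rfl

@[simp]
theorem mem_mult {X : Type} (Φ : MNbhd (MNbhd X)) (A : Set X) :
    A ∈ (mult Φ).1 ↔ {U : MNbhd X | A ∈ U.1} ∈ Φ.1 :=
  Iff.rfl

end MNbhd

@[simp]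
theorem mem_diamond {X : Type} (U A : Set X) : A ∈ (diamond U).1 ↔ (U ∩ A).Nonempty :=
  Iff.rfl

theorem MNbhd.fmap_diamond {X Y : Type} (f : X → Y) (U : Set X) :
    MNbhd.fmap f (diamond U) = diamond (f '' U) := by
  ext B
  simp [Set.image_inter_nonempty_iff]

theorem diamond_singleton {X : Type} (x : X) : diamond ({x} : Set X) = MNbhd.unit x := by
  ext A
  simp [Set.singleton_inter_nonempty]

theorem diamond_sUnion {X : Type} (S : Set (Set X)) :
    diamond (⋃₀ S) = MNbhd.mult (MNbhd.fmap diamond (diamond S)) := by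
  ext A
  simp only [mem_diamond, MNbhd.mem_mult, MNbhd.mem_fmap]
  exact ⟨fun ⟨x, ⟨U, hU, hxU⟩, hxA⟩ => ⟨U, hU, x, hxU, hxA⟩,
    fun ⟨U, hU, x, hxU, hxA⟩ => ⟨x, ⟨U, hU, hxU⟩, hxA⟩⟩

/-- `◇ : P → M` is a monad morphism from the powerset monad (unit `x ↦ {x}`,
multiplication `⋃₀`) to the monotone neighbourhood monad. -/
theorem stmt15 :
    (∀ (X Y : Type) (f : X → Y) (U : Set X),
      MNbhd.fmap f (diamond U) = diamond (f '' U)) ∧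
    (∀ (X : Type) (x : X), diamond ({x} : Set X) = MNbhd.unit x) ∧
    (∀ (X : Type) (S : Set (Set X)),
      diamond (⋃₀ S) = MNbhd.mult (MNbhd.fmap diamond (diamond S))) :=
  ⟨fun _ _ => MNbhd.fmap_diamond, fun _ => diamond_singleton, fun _ => diamond_sUnion⟩
end

section
/- Every Kleisli distributive law δ : P P → P P of the powerset functor over the powerset monad satisfies δ_X(∅) = {∅}, and moreover δ_{{0,1,2}}{{0,1},{2}} is either {{0,2},{1,2},{0,1,2}} or {{0,1,2}}. -/
/-!
Collapsing each block of a partition to a point turns it into a family of singletons, on which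
`δ` is fixed by the unit law; hence every member of `T = δ {{0,1},{2}}` contains `2` and meets
`{0,1}`, and `T` is invariant under swapping `0` and `1`. It remains to see `{0,1,2} ∈ T`.
Otherwise no member of `δ {{0,1},{2,3}}` contains both `2` and `3`, since its image under
`0,1 ↦ 2, 2 ↦ 0, 3 ↦ 1` would be `{0,1,2}`. But a member of `δ {{0,1},{2,3},{4,5}}` meets both
`{2,3}` and `{4,5}`, so one of the two ways of gluing `{4,5}` onto `{2,3}` maps it to a member
of `δ {{0,1},{2,3}}` containing `2` and `3`.
-/

/-- A Kleisli distributive law of the powerset functor over the powerset monad: a natural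
transformation `δ : PP → PP` commuting with the unit `η(x) = {x}` and the multiplication
`μ = ⋃₀` of the powerset monad. -/
structure PowDistLaw where
  δ : ∀ {X : Type}, Set (Set X) → Set (Set X)
  natural : ∀ {X Y : Type} (f : X → Y) (S : Set (Set X)),
    δ (Set.image (Set.image f) S) = Set.image (Set.image f) (δ S)
  unit_law : ∀ {X : Type} (A : Set X),
    δ ((fun x => ({x} : Set X)) '' A) = {A}
  mult_law : ∀ {X : Type} (S : Set (Set (Set X))),
    δ (Set.sUnion '' S) = ⋃₀ ((fun T => δ T) '' δ S)

namespace PowDistLaw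

variable (law : PowDistLaw) {X Y : Type}

theorem δ_empty : law.δ (∅ : Set (Set X)) = {∅} := by
  simpa using law.unit_law (∅ : Set X)

theorem image_mem_δ (f : X → Y) {S : Set (Set X)} {S' : Set (Set Y)}
    (hS : Set.image f '' S = S') {B : Set X} (hB : B ∈ law.δ S) : f '' B ∈ law.δ S' := by
  rw [← hS, law.natural]
  exact Set.mem_image_of_mem _ hB

theorem image_eq_of_mem_δ (f : X → Y) {S : Set (Set X)} {C : Set Y}
    (hS : Set.image f '' S = (fun y => {y}) '' C) {B : Set X} (hB : B ∈ law.δ S) :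
    f '' B = C := by
  simpa [law.unit_law] using law.image_mem_δ f hS hB

theorem δ_nonempty (f : X → Y) {S : Set (Set X)} {C : Set Y}
    (hS : Set.image f '' S = (fun y => {y}) '' C) : (law.δ S).Nonempty := by
  have h : (Set.image f '' law.δ S).Nonempty := by
    rw [← law.natural, hS, law.unit_law]
    exact Set.singleton_nonempty C
  exact h.of_image

theorem mem_δ_fin3_iff_swap :
    ({0, 2} : Set (Fin 3)) ∈ law.δ {{0, 1}, {2}} ↔
      ({1, 2} : Set (Fin 3)) ∈ law.δ {{0, 1}, {2}} := by
  have hswap : Set.image (![1, 0, 2] : Fin 3 → Fin 3) '' {{0, 1}, {2}} = {{0, 1}, {2}} := by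
    simp [Set.image_insert_eq, Set.pair_comm]
  constructor <;> intro h <;> simpa [Set.image_insert_eq] using law.image_mem_δ _ hswap h

theorem eq_of_mem_δ_fin3 {B : Set (Fin 3)} (hB : B ∈ law.δ {{0, 1}, {2}}) :
    B = {0, 2} ∨ B = {1, 2} ∨ B = {0, 1, 2} := by
  have h := law.image_eq_of_mem_δ (![0, 0, 1] : Fin 3 → Fin 2) (C := {0, 1})
    (by simp [Set.image_insert_eq]) hB
  simp [Set.ext_iff, Fin.forall_fin_succ, Fin.exists_fin_succ] at h ⊢
  tauto

theorem not_two_three_mem_of_mem_δ_fin4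
    (hfull : ({0, 1, 2} : Set (Fin 3)) ∉ law.δ {{0, 1}, {2}})
    {B : Set (Fin 4)} (hB : B ∈ law.δ {{0, 1}, {2, 3}}) : ¬(2 ∈ B ∧ 3 ∈ B) := by
  rintro ⟨h2, h3⟩
  set g : Fin 4 → Fin 3 := ![2, 2, 0, 1]
  have hglue : Set.image g '' {{0, 1}, {2, 3}} = {{0, 1}, {2}} := by
    simp [g, Set.image_insert_eq, Set.pair_comm]
  have himage := law.image_mem_δ g hglue hB
  have h0 : 0 ∈ g '' B := ⟨2, h2, rfl⟩
  have h1 : 1 ∈ g '' B := ⟨3, h3, rfl⟩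
  rcases law.eq_of_mem_δ_fin3 himage with h | h | h
  · simp [h] at h1
  · simp [h] at h0
  · exact hfull (h ▸ himage)

theorem exists_mem_δ_fin6 : ∃ B ∈ law.δ ({{0, 1}, {2, 3}, {4, 5}} : Set (Set (Fin 6))),
    (2 ∈ B ∨ 3 ∈ B) ∧ (4 ∈ B ∨ 5 ∈ B) := by
  set g : Fin 6 → Fin 3 := ![0, 0, 1, 1, 2, 2]
  have hcollapse : Set.image g '' {{0, 1}, {2, 3}, {4, 5}} = (fun y => {y}) '' {0, 1, 2} := by
    simp [g, Set.image_insert_eq]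
  obtain ⟨B, hB⟩ := law.δ_nonempty g hcollapse
  have h := law.image_eq_of_mem_δ g hcollapse hB
  refine ⟨B, hB, ?_⟩
  simp [g, Set.ext_iff, Fin.forall_fin_succ, Fin.exists_fin_succ] at h
  tauto

theorem full_mem_δ_fin3 : ({0, 1, 2} : Set (Fin 3)) ∈ law.δ {{0, 1}, {2}} := by
  by_contra hfull
  obtain ⟨B, hB, h23, h45⟩ := law.exists_mem_δ_fin6
  have aligned := law.not_two_three_mem_of_mem_δ_fin4 hfull
    (law.image_mem_δ (![0, 1, 2, 3, 2, 3] : Fin 6 → Fin 4)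
      (by simp [Set.image_insert_eq]) hB)
  have crossed := law.not_two_three_mem_of_mem_δ_fin4 hfull
    (law.image_mem_δ (![0, 1, 2, 3, 3, 2] : Fin 6 → Fin 4)
      (by simp [Set.image_insert_eq, Set.pair_comm]) hB)
  simp [Fin.exists_fin_succ] at aligned crossed
  tauto

theorem δ_fin3_eq :
    law.δ ({{0, 1}, {2}} : Set (Set (Fin 3))) = {{0, 2}, {1, 2}, {0, 1, 2}} ∨
      law.δ ({{0, 1}, {2}} : Set (Set (Fin 3))) = {{0, 1, 2}} := by
  have hfull := law.full_mem_δ_fin3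
  by_cases h02 : ({0, 2} : Set (Fin 3)) ∈ law.δ {{0, 1}, {2}}
  · have h12 := law.mem_δ_fin3_iff_swap.1 h02
    refine Or.inl (Set.Subset.antisymm (fun B hB => law.eq_of_mem_δ_fin3 hB) ?_)
    rintro B (rfl | rfl | rfl) <;> assumption
  · have h12 := mt law.mem_δ_fin3_iff_swap.2 h02
    refine Or.inr (Set.Subset.antisymm (fun B hB => ?_) (Set.singleton_subset_iff.2 hfull))
    rcases law.eq_of_mem_δ_fin3 hB with rfl | rfl | rfl
    exacts [absurd hB h02, absurd hB h12, rfl]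

end PowDistLaw

/-- Every Kleisli distributive law `δ : PP → PP` satisfies `δ_X ∅ = {∅}`, and
`δ {{0,1},{2}}` is either `{{0,2},{1,2},{0,1,2}}` or `{{0,1,2}}`. -/
theorem stmt18 (law : PowDistLaw) :
    (∀ X : Type, law.δ (∅ : Set (Set X)) = {∅}) ∧
    (law.δ ({{0, 1}, {2}} : Set (Set (Fin 3)))
        = {{0, 2}, {1, 2}, {0, 1, 2}} ∨
     law.δ ({{0, 1}, {2}} : Set (Set (Fin 3))) = {{0, 1, 2}}) :=
  ⟨fun _ => law.δ_empty, law.δ_fin3_eq⟩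
end
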